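/- Let f(t) = t + ∑_{i≥2} a_i t^i be a formal power series over a commutative ℚ-algebra with f ≡ t mod t². Then there exists a sequence of polynomials C_n(x) with deg C_n ≤ n−1, C_1(x) = 1, such that for every natural number k, the k-fold composition f^{∘k}(t) = ∑_{i≥1} C_i(k) t^i. -/

import Mathlib

open PowerSeries

/-- Composition `f ∘ g` of formal power series, valid when `g` has zero constant term:
the coefficient of `tⁿ` in `∑ᵢ (coeff i f)·gⁱ` only involves `i ≤ n`. -/
noncomputable def psComp {A : Type*} [CommRing A] (f g : PowerSeries A) : PowerSeries A :=
  PowerSeries.mk fun n =>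
    ∑ i ∈ Finset.range (n + 1), PowerSeries.coeff i f * PowerSeries.coeff n (g ^ i)

/-- The iterates `f^{∘0} = t`, `f^{∘(k+1)} = f ∘ f^{∘k}`. -/
noncomputable def psIter {A : Type*} [CommRing A] (f : PowerSeries A) : ℕ → PowerSeries A
  | 0 => PowerSeries.X
  | k + 1 => psComp f (psIter f k)

open PowerSeries Polynomial Finset

section Poly
variable {A : Type*} [CommRing A] [Algebra ℚ A]

/-- `g : ℕ → A` is given by a polynomial of degree ≤ d. -/
def IsPolyDeg (g : ℕ → A) (d : ℕ) : Prop :=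
  ∃ p : Polynomial A, p.natDegree ≤ d ∧ ∀ k : ℕ, p.eval (k : A) = g k

lemma IsPolyDeg.mono {g : ℕ → A} {d d' : ℕ} (h : IsPolyDeg g d) (hd : d ≤ d') :
    IsPolyDeg g d' := by
  obtain ⟨p, hp, he⟩ := h
  exact ⟨p, hp.trans hd, he⟩

lemma IsPolyDeg.congr {g h : ℕ → A} {d : ℕ} (hg : IsPolyDeg g d) (he : ∀ k, g k = h k) :
    IsPolyDeg h d := by
  obtain ⟨p, hp, hev⟩ := hg
  exact ⟨p, hp, fun k => (hev k).trans (he k)⟩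

lemma isPolyDeg_const (a : A) (d : ℕ) : IsPolyDeg (fun _ => a) d :=
  ⟨Polynomial.C a, (natDegree_C a).le.trans (Nat.zero_le d), fun k => eval_C⟩

lemma IsPolyDeg.mul {g h : ℕ → A} {d e : ℕ} (hg : IsPolyDeg g d) (hh : IsPolyDeg h e) :
    IsPolyDeg (fun k => g k * h k) (d + e) := by
  obtain ⟨p, hp, hpe⟩ := hg
  obtain ⟨q, hq, hqe⟩ := hh
  exact ⟨p * q, natDegree_mul_le.trans (add_le_add hp hq),
    fun k => by simp [hpe k, hqe k]⟩

lemma IsPolyDeg.add {g h : ℕ → A} {d : ℕ} (hg : IsPolyDeg g d) (hh : IsPolyDeg h d) :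
    IsPolyDeg (fun k => g k + h k) d := by
  obtain ⟨p, hp, hpe⟩ := hg
  obtain ⟨q, hq, hqe⟩ := hh
  exact ⟨p + q, (natDegree_add_le p q).trans (max_le hp hq),
    fun k => by simp [hpe k, hqe k]⟩

lemma isPolyDeg_sum {ι : Type*} (s : Finset ι) (g : ι → ℕ → A) (d : ℕ)
    (h : ∀ i ∈ s, IsPolyDeg (g i) d) :
    IsPolyDeg (fun k => ∑ i ∈ s, g i k) d := by
  classical
  induction s using Finset.induction_on with
  | empty => exact (isPolyDeg_const 0 d).congr (by simp)
  | insert a s hni ih =>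
    have := ((h a (mem_insert_self a s)).add (ih fun i hi => h i (mem_insert_of_mem hi)))
    exact this.congr (fun k => by rw [Finset.sum_insert hni])

lemma isPolyDeg_sum_pow (i : ℕ) :
    IsPolyDeg (fun k : ℕ => ∑ j ∈ Finset.range k, (j : A) ^ i) (i + 1) := by
  set P : Polynomial ℚ :=
    ∑ l ∈ Finset.range (i + 1),
      Polynomial.C (_root_.bernoulli l * ((i + 1).choose l) / (i + 1)) * Polynomial.X ^ (i + 1 - l)
  refine ⟨P.map (algebraMap ℚ A), ?_, ?_⟩
  · refine natDegree_map_le.trans ?_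
    refine natDegree_sum_le_of_forall_le _ _ fun l hl => ?_
    refine (natDegree_C_mul_le _ _).trans ?_
    simpa using Nat.sub_le (i+1) l
  · intro k
    have hP : P.eval (k : ℚ) = ∑ j ∈ Finset.range k, (j : ℚ) ^ i := by
      rw [sum_range_pow]
      simp only [P, eval_finset_sum, eval_mul, eval_C, eval_pow, eval_X]
      exact Finset.sum_congr rfl fun l hl => by ring
    have h2 : (Polynomial.map (algebraMap ℚ A) P).eval ((k : ℕ) : A)
        = algebraMap ℚ A (P.eval (k : ℚ)) := by
      rw [Polynomial.eval_map, Polynomial.eval₂_at_natCast]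
    rw [h2, hP, map_sum]
    exact Finset.sum_congr rfl fun j _ => by
      rw [map_pow, map_natCast]

lemma IsPolyDeg.sum_range {g : ℕ → A} {d : ℕ} (hg : IsPolyDeg g d) :
    IsPolyDeg (fun k => ∑ j ∈ Finset.range k, g j) (d + 1) := by
  obtain ⟨p, hp, hpe⟩ := hg
  have key : ∀ k : ℕ, ∑ j ∈ Finset.range k, g j
      = ∑ i ∈ Finset.range (d + 1), p.coeff i * ∑ j ∈ Finset.range k, (j : A) ^ i := by
    intro k
    calc ∑ j ∈ Finset.range k, g j
        = ∑ j ∈ Finset.range k, ∑ i ∈ Finset.range (d+1), p.coeff i * ((j:ℕ) : A) ^ i := by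
          refine Finset.sum_congr rfl fun j _ => ?_
          rw [← hpe j, Polynomial.eval_eq_sum_range' (Nat.lt_succ_of_le hp)]
      _ = ∑ i ∈ Finset.range (d+1), ∑ j ∈ Finset.range k, p.coeff i * ((j:ℕ) : A) ^ i :=
          Finset.sum_comm
      _ = ∑ i ∈ Finset.range (d+1), p.coeff i * ∑ j ∈ Finset.range k, ((j:ℕ):A) ^ i := by
          simp [Finset.mul_sum]
  refine (isPolyDeg_sum (Finset.range (d+1))
      (fun i k => p.coeff i * ∑ j ∈ Finset.range k, (j : A) ^ i) (d+1)
      (fun i hi => ?_)).congr (fun k => (key k).symm)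
  have := (isPolyDeg_const (p.coeff i) 0).mul (isPolyDeg_sum_pow (A := A) i)
  exact this.mono (by simp at hi; omega)

end Poly

section PS
variable {A : Type*} [CommRing A] [Algebra ℚ A]

lemma coeff_psComp (f g : PowerSeries A) (n : ℕ) :
    PowerSeries.coeff n (psComp f g)
      = ∑ i ∈ Finset.range (n+1), PowerSeries.coeff i f * PowerSeries.coeff n (g^i) := by
  simp [psComp]

lemma coeff_pow_eq_zero {g : PowerSeries A} (hg : constantCoeff g = 0) {i n : ℕ}
    (h : n < i) : PowerSeries.coeff n (g ^ i) = 0 := by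
  have : (X : PowerSeries A) ^ i ∣ g ^ i := pow_dvd_pow_of_dvd (X_dvd_iff.mpr hg) i
  exact (X_pow_dvd_iff.mp this) n h

lemma constantCoeff_psIter (f : PowerSeries A) (h0 : constantCoeff f = 0) (k : ℕ) :
    constantCoeff (psIter f k) = 0 := by
  induction k with
  | zero => simp [psIter]
  | succ k ih =>
    rw [← coeff_zero_eq_constantCoeff_apply,
      show psIter f (k+1) = psComp f (psIter f k) from rfl, coeff_psComp]
    rw [Finset.sum_range_one, pow_zero, coeff_zero_eq_constantCoeff_apply, h0, zero_mul]

lemma coeff_one_psIter (f : PowerSeries A) (h0 : constantCoeff f = 0)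
    (h1 : PowerSeries.coeff 1 f = 1) (k : ℕ) :
    PowerSeries.coeff 1 (psIter f k) = 1 := by
  induction k with
  | zero => simp [psIter]
  | succ k ih =>
    rw [show psIter f (k+1) = psComp f (psIter f k) from rfl, coeff_psComp]
    rw [Finset.sum_range_succ, Finset.sum_range_one, pow_zero, pow_one, h1, ih]
    simp

lemma powPoly {g : ℕ → PowerSeries A} (hg0 : ∀ k, constantCoeff (g k) = 0) {N : ℕ}
    (h : ∀ p, p ≤ N → IsPolyDeg (fun k => PowerSeries.coeff p (g k)) (p - 1)) :
    ∀ i, 1 ≤ i → ∀ m, m ≤ N →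
      IsPolyDeg (fun k => PowerSeries.coeff m ((g k) ^ i)) (m - i) := by
  intro i
  induction i with
  | zero => omega
  | succ i ih =>
    intro _ m hm
    rcases Nat.eq_zero_or_pos i with rfl | hi
    · simpa using h m hm
    · have key : ∀ k, PowerSeries.coeff m ((g k) ^ (i+1))
          = ∑ pq ∈ Finset.HasAntidiagonal.antidiagonal m,
              PowerSeries.coeff pq.1 (g k) * PowerSeries.coeff pq.2 ((g k) ^ i) := by
        intro k
        rw [pow_succ', PowerSeries.coeff_mul]
      refine (isPolyDeg_sum (Finset.HasAntidiagonal.antidiagonal m)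
          (fun pq k => PowerSeries.coeff pq.1 (g k) * PowerSeries.coeff pq.2 ((g k) ^ i))
          (m - (i+1)) ?_).congr (fun k => (key k).symm)
      rintro ⟨p, q⟩ hpq
      rw [Finset.HasAntidiagonal.mem_antidiagonal] at hpq
      rcases Nat.eq_zero_or_pos p with rfl | hp
      · exact (isPolyDeg_const 0 _).congr fun k => by
          simp [coeff_zero_eq_constantCoeff_apply, hg0 k]
      rcases lt_or_ge q i with hq | hq
      · exact (isPolyDeg_const 0 _).congr fun k => by
          simp [coeff_pow_eq_zero (hg0 k) hq]
      · exact ((h p (by omega)).mul (ih (by omega) q (by omega))).mono (by omega)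

lemma coeff_psIter_poly (f : PowerSeries A) (h0 : constantCoeff f = 0)
    (h1 : PowerSeries.coeff 1 f = 1) :
    ∀ n, IsPolyDeg (fun k => PowerSeries.coeff n (psIter f k)) (n - 1) := by
  intro n
  induction n using Nat.strong_induction_on with
  | _ n IH =>
  rcases n with _ | _ | m
  · exact (isPolyDeg_const 0 _).congr fun k => by
      rw [coeff_zero_eq_constantCoeff_apply]
      exact (constantCoeff_psIter f h0 k).symm
  · exact (isPolyDeg_const 1 _).congr fun k =>
      (coeff_one_psIter f h0 h1 k).symm
  set n := m + 1 + 1 with hn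
  have hn2 : 2 ≤ n := by omega
  set c : ℕ → A := fun k => PowerSeries.coeff n (psIter f k) with hc
  set D : ℕ → A := fun j => ∑ i ∈ Finset.Ico 2 (n+1),
      PowerSeries.coeff i f * PowerSeries.coeff n ((psIter f j) ^ i) with hD
  have step : ∀ j, c (j+1) = c j + D j := by
    intro j
    have : c (j+1) = ∑ i ∈ Finset.range (n+1),
        PowerSeries.coeff i f * PowerSeries.coeff n ((psIter f j) ^ i) := by
      show PowerSeries.coeff n (psComp f (psIter f j)) = _
      rw [coeff_psComp]
    rw [this, Finset.range_eq_Ico, ← Finset.sum_Ico_consecutive _ (by omega : 0 ≤ 2) (by omega : 2 ≤ n+1)]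
    have h02 : ∑ i ∈ Finset.Ico 0 2,
        PowerSeries.coeff i f * PowerSeries.coeff n ((psIter f j) ^ i) = c j := by
      rw [← Finset.range_eq_Ico]
      rw [Finset.sum_range_succ, Finset.sum_range_one]
      simp [← coeff_zero_eq_constantCoeff_apply, h0, h1]
      rfl
    rw [h02]
  have telescope : ∀ k, c k = c 0 + ∑ j ∈ Finset.range k, D j := by
    intro k
    induction k with
    | zero => simp
    | succ k ih => rw [Finset.sum_range_succ, step k, ih]; ring
  have hDpoly : IsPolyDeg D (n - 2) := by
    refine isPolyDeg_sum _ _ _ fun i hi => ?_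
    rw [Finset.mem_Ico] at hi
    have key : ∀ j, PowerSeries.coeff n ((psIter f j) ^ i)
        = ∑ pq ∈ Finset.HasAntidiagonal.antidiagonal n, PowerSeries.coeff pq.1 (psIter f j)
            * PowerSeries.coeff pq.2 ((psIter f j) ^ (i-1)) := by
      intro j
      rw [show i = (i-1)+1 by omega, pow_succ', PowerSeries.coeff_mul]
      simp only [show (i-1)+1-1 = i-1 by omega]
    have inner : IsPolyDeg (fun j => PowerSeries.coeff n ((psIter f j) ^ i)) (n - 2) := by
      refine (isPolyDeg_sum (Finset.HasAntidiagonal.antidiagonal n)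
          (fun pq j => PowerSeries.coeff pq.1 (psIter f j)
            * PowerSeries.coeff pq.2 ((psIter f j) ^ (i-1))) (n-2) ?_).congr
          (fun j => (key j).symm)
      rintro ⟨p, q⟩ hpq
      rw [Finset.HasAntidiagonal.mem_antidiagonal] at hpq
      rcases Nat.eq_zero_or_pos p with rfl | hp
      · exact (isPolyDeg_const 0 _).congr fun j => by
          simp [coeff_zero_eq_constantCoeff_apply, constantCoeff_psIter f h0 j]
      rcases lt_or_ge q (i-1) with hq | hq
      · exact (isPolyDeg_const 0 _).congr fun j => by
          simp [coeff_pow_eq_zero (constantCoeff_psIter f h0 j) hq]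
      · have hplt : p ≤ n - 1 := by omega
        have h1' := IH p (by omega)
        have h2' := powPoly (fun j => constantCoeff_psIter f h0 j)
          (fun r hr => IH r (by omega)) (i-1) (by omega) q (by omega : q ≤ n - 1)
        exact (h1'.mul h2').mono (by omega)
    exact ((isPolyDeg_const (PowerSeries.coeff i f) 0).mul inner).mono (by omega)
  have := ((isPolyDeg_const (c 0) (n-1)).add (hDpoly.sum_range.mono (by omega)))
  exact this.congr fun k => (telescope k).symm

end PS

/-- for `f(t) = t + ∑_{i≥2} aᵢtⁱ` over a commutative `ℚ`-algebra, there are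
polynomials `Cₙ(x)` with `deg Cₙ ≤ n − 1` and `C₁ = 1` such that
`f^{∘k}(t) = ∑_{i≥1} Cᵢ(k) tⁱ` for all `k ∈ ℕ`. -/
theorem stmt13 {A : Type*} [CommRing A] [Algebra ℚ A] (f : PowerSeries A)
    (h0 : PowerSeries.constantCoeff f = 0) (h1 : PowerSeries.coeff 1 f = 1) :
    ∃ C : ℕ → Polynomial A,
      (∀ n, (C n).natDegree ≤ n - 1) ∧ C 1 = 1 ∧
      ∀ k n, 1 ≤ n → PowerSeries.coeff n (psIter f k) = (C n).eval (k : A) := by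
  classical
  have P := coeff_psIter_poly f h0 h1
  refine ⟨fun n => if n = 1 then 1 else Classical.choose (P n), ?_, ?_, ?_⟩
  · intro n
    by_cases hn : n = 1
    · simp [hn]
    · simpa [hn] using (Classical.choose_spec (P n)).1
  · simp
  · intro k n hn
    by_cases hn1 : n = 1
    · subst hn1
      simp [coeff_one_psIter f h0 h1 k]
    · simp only [if_neg hn1]
      exact ((Classical.choose_spec (P n)).2 k).symm
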